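/- arXiv:1208.3288 — 2 statements merged into one kernel-verified Lean document; each statement's English description precedes it below -/
import Mathlib

section
/- Let σ : ℝⁿ → ℝ be convex and Lipschitz, H : [0,T] × ℝⁿ → ℝ continuous, and define u(t,x) = max_{q} {⟨x,q⟩ - σ*(q) - ∫₀ᵗ H(τ,q) dτ}. Then u is locally Lipschitz on (0,T) × ℝⁿ and u(0,x) = σ(x) for all x ∈ ℝⁿ. -/
local notation "⟪" x ", " y "⟫" => @inner ℝ _ _ x y

/-- The Fenchel (Legendre) conjugate of `σ`, with values in `EReal`. -/
noncomputable def fenchelConj {n : ℕ} (σ : EuclideanSpace ℝ (Fin n) → ℝ)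
    (q : EuclideanSpace ℝ (Fin n)) : EReal :=
  ⨆ x : EuclideanSpace ℝ (Fin n), ((⟪x, q⟫ - σ x : ℝ) : EReal)

/-- The Hopf functional `φ(t,x,q) = ⟨x,q⟩ - σ*(q) - ∫₀ᵗ H(τ,q) dτ` (`EReal`-valued). -/
noncomputable def hopfPhi {n : ℕ} (σ : EuclideanSpace ℝ (Fin n) → ℝ)
    (H : ℝ → EuclideanSpace ℝ (Fin n) → ℝ) (t : ℝ)
    (x q : EuclideanSpace ℝ (Fin n)) : EReal :=
  ((⟪x, q⟫ - ∫ τ in (0:ℝ)..t, H τ q : ℝ) : EReal) - fenchelConj σ q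

/-- The set `ℓ(t,x)` of maximizers over `q ∈ ℝⁿ` of `φ(t,x,·)`. -/
def hopfArgmax {n : ℕ} (σ : EuclideanSpace ℝ (Fin n) → ℝ)
    (H : ℝ → EuclideanSpace ℝ (Fin n) → ℝ) (t : ℝ)
    (x : EuclideanSpace ℝ (Fin n)) : Set (EuclideanSpace ℝ (Fin n)) :=
  {q | ∀ q', hopfPhi σ H t x q' ≤ hopfPhi σ H t x q}

section Aux
variable {n : ℕ} {σ : EuclideanSpace ℝ (Fin n) → ℝ} {L : NNReal}

lemma fc_lb (x q : EuclideanSpace ℝ (Fin n)) :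
    ((⟪x, q⟫ - σ x : ℝ) : EReal) ≤ fenchelConj σ q :=
  le_iSup (fun y => ((⟪y, q⟫ - σ y : ℝ) : EReal)) x

lemma fc_ne_bot (q : EuclideanSpace ℝ (Fin n)) : fenchelConj σ q ≠ ⊥ :=
  fun h => absurd ((h ▸ fc_lb 0 q : _)) (by simp)

lemma fc_top (hlip : LipschitzWith L σ) {q : EuclideanSpace ℝ (Fin n)}
    (hq : (L : ℝ) < ‖q‖) : fenchelConj σ q = ⊤ := by
  rw [EReal.eq_top_iff_forall_lt]
  intro c
  set D : ℝ := ‖q‖ * (‖q‖ - L) with hD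
  have hD0 : 0 < D := mul_pos (lt_of_le_of_lt L.coe_nonneg hq) (by linarith)
  set s : ℝ := (|c| + |σ 0| + 1) / D with hs
  have hs0 : 0 < s := div_pos (by positivity) hD0
  refine lt_of_lt_of_le ?_ (fc_lb (s • q) q)
  rw [EReal.coe_lt_coe_iff]
  have hinner : ⟪s • q, q⟫ = s * ‖q‖ ^ 2 := by
    rw [real_inner_smul_left, real_inner_self_eq_norm_sq]
  have hσ : σ (s • q) - σ 0 ≤ L * (s * ‖q‖) := by
    have h1 := hlip.dist_le_mul (s • q) 0
    simp only [dist_eq_norm, sub_zero, norm_smul, Real.norm_eq_abs, abs_of_pos hs0] at h1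
    exact (le_abs_self _).trans h1
  have hsD : s * D = |c| + |σ 0| + 1 := div_mul_cancel₀ _ hD0.ne'
  have hc : c ≤ |c| := le_abs_self c
  have hσ0 : σ 0 ≤ |σ 0| := le_abs_self _
  have hexp : s * D = s * ‖q‖ ^ 2 - s * (L * ‖q‖) := by rw [hD]; ring
  rw [hinner]
  have hσ' : (L : ℝ) * (s * ‖q‖) = s * ((L : ℝ) * ‖q‖) := by ring
  linarith [hσ, hσ', hexp, hsD, hc, hσ0]

lemma fc_real (hlip : LipschitzWith L σ) {q : EuclideanSpace ℝ (Fin n)}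
    (h : fenchelConj σ q ≠ ⊤) :
    ∃ r : ℝ, fenchelConj σ q = (r : EReal) ∧ ‖q‖ ≤ L := by
  refine ⟨(fenchelConj σ q).toReal, (EReal.coe_toReal h (fc_ne_bot q)).symm, ?_⟩
  by_contra hq
  exact h (fc_top hlip (not_le.1 hq))

lemma hopfPhi_eq {H : ℝ → EuclideanSpace ℝ (Fin n) → ℝ} {t : ℝ}
    {x q : EuclideanSpace ℝ (Fin n)} {r : ℝ} (hr : fenchelConj σ q = (r : EReal)) :
    hopfPhi σ H t x q = ((⟪x, q⟫ - (∫ τ in (0:ℝ)..t, H τ q) - r : ℝ) : EReal) := by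
  rw [hopfPhi, hr, ← EReal.coe_sub]

end Aux

theorem stmt4 {n : ℕ} (T : ℝ) (hT : 0 < T) (L : NNReal)
    (σ : EuclideanSpace ℝ (Fin n) → ℝ)
    (hconv : ConvexOn ℝ Set.univ σ) (hlip : LipschitzWith L σ)
    (H : ℝ → EuclideanSpace ℝ (Fin n) → ℝ)
    (hH : ContinuousOn (fun p : ℝ × EuclideanSpace ℝ (Fin n) => H p.1 p.2)
      (Set.Icc 0 T ×ˢ Set.univ))
    (u : ℝ × EuclideanSpace ℝ (Fin n) → ℝ)
    (hu : ∀ t ∈ Set.Icc (0:ℝ) T, ∀ x,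
      IsGreatest (Set.range (hopfPhi σ H t x)) ((u (t, x) : ℝ) : EReal)) :
    (∀ z ∈ Set.Ioo (0:ℝ) T ×ˢ (Set.univ : Set (EuclideanSpace ℝ (Fin n))),
      ∃ K : NNReal, ∃ s ∈ nhds z, LipschitzOnWith K u s) ∧
    (∀ x, u (0, x) = σ x) := by
  have h0T : (0:ℝ) ∈ Set.Icc (0:ℝ) T := ⟨le_refl 0, hT.le⟩
  constructor
  · rintro ⟨t0, x0⟩ ⟨ht0, -⟩
    obtain ⟨M, hM⟩ := ((isCompact_Icc (a := (0:ℝ)) (b := T)).prod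
      (isCompact_closedBall (0 : EuclideanSpace ℝ (Fin n)) (L : ℝ))).exists_bound_of_continuousOn
      (hH.mono (Set.prod_mono_right (Set.subset_univ _)))
    set M' : ℝ := max M 0 with hM'
    have hM'0 : 0 ≤ M' := le_max_right _ _
    set K : NNReal := ⟨(L : ℝ) + M', by positivity⟩ with hKdef
    refine ⟨K, Set.Icc 0 T ×ˢ Set.univ, ?_, ?_⟩
    · exact mem_nhds_iff.2 ⟨Set.Ioo 0 T ×ˢ Set.univ,
        Set.prod_mono Set.Ioo_subset_Icc_self subset_rfl,
        isOpen_Ioo.prod isOpen_univ, ⟨ht0, Set.mem_univ _⟩⟩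
    · rw [lipschitzOnWith_iff_dist_le_mul]
      have key : ∀ a ∈ Set.Icc (0:ℝ) T, ∀ b ∈ Set.Icc (0:ℝ) T,
          ∀ y y' : EuclideanSpace ℝ (Fin n),
          u (a, y) - u (b, y') ≤ (L : ℝ) * ‖y - y'‖ + M' * |a - b| := by
        intro a ha b hb y y'
        obtain ⟨⟨q, hq⟩, -⟩ := hu a ha y
        have hqtop : fenchelConj σ q ≠ ⊤ := by
          intro htop
          rw [hopfPhi, htop, EReal.sub_top] at hq
          exact absurd hq (by simp)
        obtain ⟨r, hr, hqL⟩ := fc_real hlip hqtop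
        have hq1 : ⟪y, q⟫ - (∫ τ in (0:ℝ)..a, H τ q) - r = u (a, y) := by
          have h1 := hq; rw [hopfPhi_eq hr] at h1; exact_mod_cast h1
        have hq2 : ⟪y', q⟫ - (∫ τ in (0:ℝ)..b, H τ q) - r ≤ u (b, y') := by
          have h1 := (hu b hb y').2 ⟨q, rfl⟩
          rw [hopfPhi_eq hr] at h1; exact_mod_cast h1
        have hHc : ContinuousOn (fun τ => H τ q) (Set.Icc 0 T) := by
          have : ContinuousOn ((fun p : ℝ × EuclideanSpace ℝ (Fin n) => H p.1 p.2) ∘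
              (fun τ : ℝ => (τ, q))) (Set.Icc 0 T) :=
            hH.comp ((continuous_id.prodMk continuous_const).continuousOn)
              (fun τ hτ => ⟨hτ, Set.mem_univ _⟩)
          exact this
        have hint : ∀ c d : ℝ, c ∈ Set.Icc (0:ℝ) T → d ∈ Set.Icc (0:ℝ) T →
            IntervalIntegrable (fun τ => H τ q) MeasureTheory.volume c d :=
          fun c d hc hd => (hHc.mono (Set.uIcc_subset_Icc hc hd)).intervalIntegrable
        have hsplit : (∫ τ in (0:ℝ)..b, H τ q) - (∫ τ in (0:ℝ)..a, H τ q)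
            = ∫ τ in a..b, H τ q := by
          rw [← intervalIntegral.integral_add_adjacent_intervals (hint 0 a h0T ha)
            (hint a b ha hb)]
          ring
        have hqball : q ∈ Metric.closedBall (0 : EuclideanSpace ℝ (Fin n)) (L : ℝ) := by
          simpa [Metric.mem_closedBall, dist_zero_right] using hqL
        have hIbnd : |∫ τ in a..b, H τ q| ≤ M' * |b - a| := by
          have h1 : ∀ τ ∈ Set.uIoc a b, ‖H τ q‖ ≤ M' := by
            intro τ hτ
            have hτ' : τ ∈ Set.Icc (0:ℝ) T :=
              Set.uIcc_subset_Icc ha hb (Set.uIoc_subset_uIcc hτ)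
            exact (hM (τ, q) ⟨hτ', hqball⟩).trans (le_max_left _ _)
          simpa [Real.norm_eq_abs] using
            intervalIntegral.norm_integral_le_of_norm_le_const h1
        have hinner : ⟪y, q⟫ - ⟪y', q⟫ ≤ (L : ℝ) * ‖y - y'‖ := by
          have h1 : ⟪y - y', q⟫ ≤ ‖y - y'‖ * ‖q‖ := real_inner_le_norm _ _
          rw [inner_sub_left] at h1
          nlinarith [norm_nonneg (y - y'), hqL, norm_nonneg q]
        have habs : ∫ τ in a..b, H τ q ≤ M' * |a - b| := by
          rw [abs_sub_comm] at hIbnd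
          exact (le_abs_self _).trans hIbnd
        linarith [hq1, hq2, hsplit, habs, hinner]
      rintro ⟨t, x⟩ ⟨ht, -⟩ ⟨t', x'⟩ ⟨ht', -⟩
      have d1 := key t ht t' ht' x x'
      have d2 := key t' ht' t ht x' x
      have hdx : ‖x - x'‖ ≤ dist (t, x) (t', x') := by
        rw [Prod.dist_eq, ← dist_eq_norm]
        exact le_max_right _ _
      have hdt : |t - t'| ≤ dist (t, x) (t', x') := by
        rw [Prod.dist_eq, ← Real.dist_eq]
        exact le_max_left _ _
      have hd0 : (0:ℝ) ≤ dist (t, x) (t', x') := dist_nonneg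
      rw [Real.dist_eq]
      have hK : (K : ℝ) = (L : ℝ) + M' := rfl
      rw [hK, abs_sub_le_iff]
      constructor
      · calc u (t, x) - u (t', x') ≤ (L : ℝ) * ‖x - x'‖ + M' * |t - t'| := d1
          _ ≤ ((L : ℝ) + M') * dist (t, x) (t', x') := by
            nlinarith [mul_le_mul_of_nonneg_left hdx L.coe_nonneg,
              mul_le_mul_of_nonneg_left hdt hM'0]
      · have hcomm : dist (t, x) (t', x') = dist (t', x') (t, x) := dist_comm _ _
        calc u (t', x') - u (t, x) ≤ (L : ℝ) * ‖x' - x‖ + M' * |t' - t| := d2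
          _ ≤ ((L : ℝ) + M') * dist (t, x) (t', x') := by
            rw [norm_sub_rev, abs_sub_comm]
            nlinarith [mul_le_mul_of_nonneg_left hdx L.coe_nonneg,
              mul_le_mul_of_nonneg_left hdt hM'0]
  · intro x
    obtain ⟨⟨q0, hq0⟩, hub⟩ := hu 0 h0T x
    have hphi0 : ∀ q, hopfPhi σ H 0 x q = ((⟪x, q⟫ : ℝ) : EReal) - fenchelConj σ q := by
      intro q; rw [hopfPhi, intervalIntegral.integral_same, sub_zero]
    have hupper : u (0, x) ≤ σ x := by
      have h1 : hopfPhi σ H 0 x q0 ≤ ((σ x : ℝ) : EReal) := by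
        rw [hphi0]
        calc ((⟪x, q0⟫ : ℝ) : EReal) - fenchelConj σ q0
            ≤ ((⟪x, q0⟫ : ℝ) : EReal) - ((⟪x, q0⟫ - σ x : ℝ) : EReal) :=
              EReal.sub_le_sub le_rfl (fc_lb x q0)
          _ = ((σ x : ℝ) : EReal) := by rw [← EReal.coe_sub, EReal.coe_eq_coe_iff]; ring
      rw [hq0] at h1
      exact_mod_cast h1
    have hlower : σ x ≤ u (0, x) := by
      refine le_of_forall_pos_le_add ?_
      intro ε hε
      set S : Set (EuclideanSpace ℝ (Fin n) × ℝ) :=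
        {p | p.1 ∈ (Set.univ : Set (EuclideanSpace ℝ (Fin n))) ∧ σ p.1 ≤ p.2} with hSdef
      have hSconv : Convex ℝ S := hconv.convex_epigraph
      have hSclosed : IsClosed S := by
        have : S = {p : EuclideanSpace ℝ (Fin n) × ℝ | σ p.1 ≤ p.2} := by
          ext p; simp [hSdef]
        rw [this]
        exact isClosed_le (hlip.continuous.comp continuous_fst) continuous_snd
      have hnot : (x, σ x - ε) ∉ S := by
        simp only [hSdef, Set.mem_setOf_eq, Set.mem_univ, true_and, not_le]
        linarith
      obtain ⟨f, v, hfx, hfS⟩ := geometric_hahn_banach_point_closed hSconv hSclosed hnot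
      set c : ℝ := f (0, 1) with hc
      set g : EuclideanSpace ℝ (Fin n) →L[ℝ] ℝ :=
        f.comp (ContinuousLinearMap.inl ℝ (EuclideanSpace ℝ (Fin n)) ℝ) with hg
      have hdec : ∀ (y : EuclideanSpace ℝ (Fin n)) (rr : ℝ), f (y, rr) = g y + rr * c := by
        intro y rr
        have hsum : (y, rr) = (y, (0:ℝ)) + rr • ((0 : EuclideanSpace ℝ (Fin n)), (1:ℝ)) := by
          simp [Prod.ext_iff]
        rw [hsum, map_add, map_smul]
        simp only [hg, hc, ContinuousLinearMap.comp_apply, ContinuousLinearMap.inl_apply,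
          smul_eq_mul]
      have hmemS : ∀ y : EuclideanSpace ℝ (Fin n), (y, σ y) ∈ S :=
        fun y => ⟨Set.mem_univ _, le_refl _⟩
      have hcpos : 0 < c := by
        have h1 : f (x, σ x - ε) < f (x, σ x) := hfx.trans (hfS _ (hmemS x))
        rw [hdec, hdec] at h1
        nlinarith [h1, hε]
      set q : EuclideanSpace ℝ (Fin n) :=
        (InnerProductSpace.toDual ℝ (EuclideanSpace ℝ (Fin n))).symm ((-c⁻¹) • g) with hqdef
      have hinnerq : ∀ y : EuclideanSpace ℝ (Fin n), ⟪y, q⟫ = -c⁻¹ * g y := by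
        intro y
        rw [real_inner_comm, hqdef, InnerProductSpace.toDual_symm_apply]
        simp
      have key : ∀ y : EuclideanSpace ℝ (Fin n), ⟪y, q⟫ - σ y ≤ ⟪x, q⟫ - σ x + ε := by
        intro y
        have h1 : f (x, σ x - ε) < f (y, σ y) := hfx.trans (hfS _ (hmemS y))
        rw [hdec, hdec] at h1
        rw [hinnerq, hinnerq]
        have hc0 : c ≠ 0 := hcpos.ne'
        have h2 := mul_le_mul_of_nonneg_left h1.le (inv_nonneg.2 hcpos.le)
        have e1 : c⁻¹ * (g x + (σ x - ε) * c) = c⁻¹ * g x + (σ x - ε) := by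
          field_simp
        have e2 : c⁻¹ * (g y + σ y * c) = c⁻¹ * g y + σ y := by
          field_simp
        rw [e1, e2] at h2
        linarith
      have hfcq : fenchelConj σ q ≤ ((⟪x, q⟫ - σ x + ε : ℝ) : EReal) :=
        iSup_le fun y => EReal.coe_le_coe_iff.2 (key y)
      have h2 : ((σ x - ε : ℝ) : EReal) ≤ hopfPhi σ H 0 x q := by
        rw [hphi0]
        calc ((σ x - ε : ℝ) : EReal)
            = ((⟪x, q⟫ : ℝ) : EReal) - ((⟪x, q⟫ - σ x + ε : ℝ) : EReal) := by
              rw [← EReal.coe_sub, EReal.coe_eq_coe_iff]; ring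
          _ ≤ _ := EReal.sub_le_sub le_rfl hfcq
      have h3 := h2.trans (hub ⟨q, rfl⟩)
      rw [EReal.coe_le_coe_iff] at h3
      linarith
    linarith
end

section
/- Let σ : ℝⁿ → ℝ be convex and Lipschitz, H continuous in (t,p), u(t,x) = max_q {⟨x,q⟩ - σ*(q) - ∫₀ᵗ H(τ,q)dτ}, and suppose at (t₀,x₀) ∈ (0,T) × ℝⁿ the set of maximizers ℓ(t₀,x₀) is a singleton {p}. Then u is (totally) differentiable at (t₀,x₀) with ∇ₓu(t₀,x₀) = p and ∂ₜu(t₀,x₀) = -H(t₀,p). -/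
/-!
Where `σ*(q)` is finite, `φ(t, x, q) - φ(t₀, x₀, q)` is the explicit increment
`⟨x - x₀, q⟩ - ∫_{t₀}^t H(τ, q) dτ`. Comparing `u(t, x)` with `φ(t, x, p)`, and `u(t₀, x₀)` with
`φ(t₀, x₀, q)` for a maximizer `q` of `φ(t, x, ·)`, squeezes `u(t, x) - u(t₀, x₀)` between the
increments at `p` and at `q`. Since `σ` is `L`-Lipschitz, `σ* = ⊤` outside the closed ball of
radius `L`, so the maximizers `q` stay in a compact set; as `φ(t₀, x₀, ·)` is upper
semicontinuous with unique maximizer `p`, they converge to `p`. Both increments are then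
`-H(t₀, p) (t - t₀) + ⟨p, x - x₀⟩ + o(|t - t₀| + ‖x - x₀‖)` by continuity of `H` at `(t₀, p)`.
-/

local notation "⟪" x ", " y "⟫" => @inner ℝ _ _ x y

open Filter Topology Asymptotics Set
open scoped Interval

theorem EReal.coe_sub_iSup {ι : Sort*} (a : ℝ) (f : ι → EReal) :
    (a : EReal) - ⨆ i, f i = ⨅ i, ((a : EReal) - f i) := by
  have hcont : Continuous fun b : EReal => (a : EReal) - b :=
    continuous_iff_continuousAt.2 fun b =>
      (EReal.continuousAt_add (Or.inl (EReal.coe_ne_top a)) (Or.inl (EReal.coe_ne_bot a))).comp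
        (f := fun b : EReal => ((a : EReal), -b))
        (continuous_const.prodMk continuous_neg).continuousAt
  exact Antitone.map_iSup_of_continuousAt hcont.continuousAt
    (fun _ _ h => EReal.sub_le_sub le_rfl h) (EReal.coe_sub_bot a)

/-- By upper semicontinuity every cluster point `x` of `Q` has `a ≤ f x`, so `p` is the only one. -/
theorem UpperSemicontinuous.tendsto_nhds_of_unique_max {α X β : Type*} [TopologicalSpace X]
    [LinearOrder β] [DenselyOrdered β] [TopologicalSpace β] [OrderTopology β] {f : X → β}
    (hf : UpperSemicontinuous f) {K : Set X} (hK : IsCompact K) {a : β} {p : X}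
    (hmax : ∀ x, a ≤ f x → x = p) {l : Filter α} {Q : α → X} {g : α → β}
    (hQK : ∀ᶠ z in l, Q z ∈ K) (hg : Tendsto g l (𝓝 a)) (hgf : ∀ᶠ z in l, g z ≤ f (Q z)) :
    Tendsto Q l (𝓝 p) := by
  refine hK.tendsto_nhds_of_unique_mapClusterPt hQK fun x _ hx => hmax x ?_
  by_contra! hlt
  obtain ⟨b, hxb, hba⟩ := exists_between hlt
  have hbelow : ∃ᶠ z in l, f (Q z) < b := hx.frequently (hf x b hxb)
  have habove : ∀ᶠ z in l, b < f (Q z) :=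
    (hg.eventually (lt_mem_nhds hba)).and hgf |>.mono fun _ h => h.1.trans_le h.2
  obtain ⟨z, hz₁, hz₂⟩ := (hbelow.and_eventually habove).exists
  exact lt_asymm hz₁ hz₂

theorem Asymptotics.IsLittleO.of_le_of_le {α F : Type*} [Norm F] {l : Filter α}
    {f g h : α → ℝ} {k : α → F} (hg : g =o[l] k) (hh : h =o[l] k)
    (hgf : ∀ᶠ x in l, g x ≤ f x) (hfh : ∀ᶠ x in l, f x ≤ h x) : f =o[l] k := by
  refine IsBigO.trans_isLittleO (g := fun x => |g x| + |h x|) ?_ (hg.norm_left.add hh.norm_left)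
  refine IsBigO.of_bound' ?_
  filter_upwards [hgf, hfh] with x h₁ h₂
  rw [Real.norm_eq_abs, Real.norm_of_nonneg (by positivity), abs_le]
  constructor
  · linarith [neg_abs_le (g x), abs_nonneg (h x)]
  · linarith [le_abs_self (h x), abs_nonneg (g x)]

theorem Asymptotics.isLittleO_inner_sub_of_tendsto {α E : Type*} [NormedAddCommGroup E]
    [InnerProductSpace ℝ E] {l : Filter α} {f Q : α → E} {p : E} (hQ : Tendsto Q l (𝓝 p)) :
    (fun a => ⟪f a, Q a - p⟫) =o[l] f := by
  refine isLittleO_iff.2 fun ε hε => ?_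
  filter_upwards [hQ (Metric.closedBall_mem_nhds p hε)] with a ha
  calc ‖⟪f a, Q a - p⟫‖ ≤ ‖f a‖ * ‖Q a - p‖ := norm_inner_le_norm _ _
    _ ≤ ‖f a‖ * ε := by gcongr; exact mem_closedBall_iff_norm.1 ha
    _ = ε * ‖f a‖ := mul_comm _ _

section Increment

variable {E : Type*} [NormedAddCommGroup E] {H : ℝ → E → ℝ}

theorem isLittleO_integral_sub_of_tendsto (hH : Continuous fun w : ℝ × E => H w.1 w.2) {z₀ : ℝ × E}
    {p : E} {Q : ℝ × E → E} (hQ : Tendsto Q (𝓝 z₀) (𝓝 p)) :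
    (fun z => ∫ τ in z₀.1..z.1, (H τ (Q z) - H z₀.1 p)) =o[𝓝 z₀] fun z => z - z₀ := by
  refine isLittleO_iff.2 fun ε hε => ?_
  have hHε : ∀ᶠ w in 𝓝 (z₀.1, p), ‖H w.1 w.2 - H z₀.1 p‖ ≤ ε := by
    filter_upwards [hH.continuousAt (Metric.closedBall_mem_nhds (H z₀.1 p) hε)] with w hw
    rwa [mem_preimage, Metric.mem_closedBall, dist_eq_norm] at hw
  obtain ⟨δ, hδ, hball⟩ := Metric.eventually_nhds_iff_ball.1 hHε
  filter_upwards [Metric.ball_mem_nhds z₀ hδ, hQ (Metric.ball_mem_nhds p hδ)] with z hz hQz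
  rw [Metric.mem_ball, Prod.dist_eq, max_lt_iff] at hz
  have hbound : ∀ τ ∈ Ι z₀.1 z.1, ‖H τ (Q z) - H z₀.1 p‖ ≤ ε := by
    refine fun τ hτ => hball (τ, Q z) ?_
    have hτ : dist τ z₀.1 ≤ dist z.1 z₀.1 := by
      rw [dist_comm τ, dist_comm z.1]
      exact Real.dist_left_le_of_mem_uIcc (uIoc_subset_uIcc hτ)
    rw [Metric.mem_ball, Prod.dist_eq]
    exact max_lt (hτ.trans_lt hz.1) hQz
  calc ‖∫ τ in z₀.1..z.1, (H τ (Q z) - H z₀.1 p)‖ ≤ ε * |z.1 - z₀.1| :=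
        intervalIntegral.norm_integral_le_of_norm_le_const hbound
    _ ≤ ε * ‖z - z₀‖ := by gcongr; exact norm_fst_le (z - z₀)

variable [InnerProductSpace ℝ E]

/-- The change of `hopfPhi σ H · · q` from `z₀` to `z` (where `σ*(q)` is finite). -/
noncomputable def hopfIncrement (H : ℝ → E → ℝ) (z₀ z : ℝ × E) (q : E) : ℝ :=
  ⟪z.2 - z₀.2, q⟫ - ∫ τ in z₀.1..z.1, H τ q

noncomputable def hopfDerivative (H : ℝ → E → ℝ) (t₀ : ℝ) (p : E) : ℝ × E →L[ℝ] ℝ :=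
  (-(H t₀ p)) • ContinuousLinearMap.fst ℝ ℝ E +
    (innerSL ℝ p).comp (ContinuousLinearMap.snd ℝ ℝ E)

@[simp]
theorem hopfIncrement_self (z₀ : ℝ × E) (q : E) : hopfIncrement H z₀ z₀ q = 0 := by
  simp [hopfIncrement]

theorem hopfIncrement_swap (z₀ z : ℝ × E) (q : E) :
    hopfIncrement H z z₀ q = -hopfIncrement H z₀ z q := by
  rw [hopfIncrement, hopfIncrement, intervalIntegral.integral_symm, ← neg_sub z.2, inner_neg_left]
  ring

theorem continuous_hopfIncrement (hH : Continuous fun w : ℝ × E => H w.1 w.2) (z₀ : ℝ × E) :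
    Continuous fun w : (ℝ × E) × E => hopfIncrement H z₀ w.1 w.2 := by
  refine ((continuous_fst.snd.sub continuous_const).inner continuous_snd).sub ?_
  exact intervalIntegral.continuous_parametric_intervalIntegral_of_continuous
    (f := fun w : (ℝ × E) × E => fun τ => H τ w.2)
    (hH.comp (continuous_snd.prodMk continuous_fst.snd)) continuous_fst.fst

theorem tendsto_hopfIncrement (hH : Continuous fun w : ℝ × E => H w.1 w.2) {z₀ : ℝ × E}
    {K : Set E} (hK : IsCompact K) {Q : ℝ × E → E} (hQ : ∀ᶠ z in 𝓝 z₀, Q z ∈ K) :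
    Tendsto (fun z => hopfIncrement H z₀ z (Q z)) (𝓝 z₀) (𝓝 0) := by
  refine Metric.tendsto_nhds.2 fun ε hε => ?_
  have hsmall : ∀ᶠ z in 𝓝 z₀, ∀ q ∈ K, dist (hopfIncrement H z₀ z q) 0 < ε := by
    refine hK.eventually_forall_of_forall_eventually fun q _ => ?_
    have := (continuous_hopfIncrement hH z₀).continuousAt (x := (z₀, q))
    rw [ContinuousAt, hopfIncrement_self] at this
    exact this (Metric.ball_mem_nhds 0 hε)
  filter_upwards [hsmall, hQ] with z hz hQz using hz _ hQz

theorem hopfIncrement_sub_eq (hH : Continuous fun w : ℝ × E => H w.1 w.2) (z₀ z : ℝ × E)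
    (p q : E) :
    hopfIncrement H z₀ z q - hopfDerivative H z₀.1 p (z - z₀) =
      ⟪z.2 - z₀.2, q - p⟫ - ∫ τ in z₀.1..z.1, (H τ q - H z₀.1 p) := by
  have hint : IntervalIntegrable (fun τ => H τ q) MeasureTheory.volume z₀.1 z.1 :=
    (hH.comp (continuous_id.prodMk continuous_const)).intervalIntegrable _ _
  rw [intervalIntegral.integral_sub hint intervalIntegrable_const, intervalIntegral.integral_const,
    hopfIncrement, inner_sub_right, real_inner_comm p]
  simp only [hopfDerivative, add_apply, smul_apply,
    ContinuousLinearMap.coe_fst', ContinuousLinearMap.comp_apply, ContinuousLinearMap.coe_snd',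
    coe_innerSL_apply, Prod.fst_sub, Prod.snd_sub, smul_eq_mul]
  ring

theorem isLittleO_hopfIncrement_sub (hH : Continuous fun w : ℝ × E => H w.1 w.2) {z₀ : ℝ × E}
    {p : E} {Q : ℝ × E → E} (hQ : Tendsto Q (𝓝 z₀) (𝓝 p)) :
    (fun z => hopfIncrement H z₀ z (Q z) - hopfDerivative H z₀.1 p (z - z₀)) =o[𝓝 z₀]
      fun z => z - z₀ := by
  simp only [hopfIncrement_sub_eq hH]
  exact ((isLittleO_inner_sub_of_tendsto hQ).trans_isBigO
    (isBigO_snd_prod' (f' := fun z => z - z₀))).sub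
    (isLittleO_integral_sub_of_tendsto hH hQ)

theorem hasFDerivAt_of_hopfIncrement_le (hH : Continuous fun w : ℝ × E => H w.1 w.2)
    {u : ℝ × E → ℝ} {z₀ : ℝ × E} {p : E} {Q : ℝ × E → E} (hQ : Tendsto Q (𝓝 z₀) (𝓝 p))
    (hlow : ∀ᶠ z in 𝓝 z₀, hopfIncrement H z₀ z p ≤ u z - u z₀)
    (hup : ∀ᶠ z in 𝓝 z₀, u z - u z₀ ≤ hopfIncrement H z₀ z (Q z)) :
    HasFDerivAt u (hopfDerivative H z₀.1 p) z₀ := by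
  rw [hasFDerivAt_iff_isLittleO]
  refine (isLittleO_hopfIncrement_sub hH (tendsto_const_nhds (x := p))).of_le_of_le
    (isLittleO_hopfIncrement_sub hH hQ) ?_ ?_
  · filter_upwards [hlow] with z hz using sub_le_sub_right hz _
  · filter_upwards [hup] with z hz using sub_le_sub_right hz _

end Increment

section Hopf

variable {n : ℕ} {σ : EuclideanSpace ℝ (Fin n) → ℝ} {H : ℝ → EuclideanSpace ℝ (Fin n) → ℝ}

theorem fenchelConj_ne_bot (σ : EuclideanSpace ℝ (Fin n) → ℝ) (q : EuclideanSpace ℝ (Fin n)) :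
    fenchelConj σ q ≠ ⊥ :=
  ne_bot_of_le_ne_bot (EReal.coe_ne_bot _)
    (le_iSup (fun x => ((⟪x, q⟫ - σ x : ℝ) : EReal)) 0)

/-- Along the ray `x = s • q`, `⟨x, q⟩ - σ x ≥ s ‖q‖ (‖q‖ - L) - σ 0`. -/
theorem norm_le_of_fenchelConj_ne_top {L : NNReal} (hlip : LipschitzWith L σ)
    {q : EuclideanSpace ℝ (Fin n)} (hq : fenchelConj σ q ≠ ⊤) : ‖q‖ ≤ L := by
  by_contra! hLq
  have hlin : Tendsto (fun s : ℝ => s * (‖q‖ * (‖q‖ - L)) - σ 0) atTop atTop :=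
    tendsto_atTop_add_const_right _ _
      (tendsto_id.atTop_mul_const (mul_pos (L.coe_nonneg.trans_lt hLq) (sub_pos.2 hLq)))
  have hray : Tendsto (fun s : ℝ => ⟪s • q, q⟫ - σ (s • q)) atTop atTop := by
    refine tendsto_atTop_mono' _ ?_ hlin
    filter_upwards [eventually_ge_atTop 0] with s hs
    have := hlip.le_add_mul (s • q) 0
    rw [dist_zero_right, norm_smul, Real.norm_of_nonneg hs] at this
    rw [real_inner_smul_left, real_inner_self_eq_norm_sq]
    nlinarith
  refine hq (iSup_eq_top.2 fun b hb => ?_)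
  obtain ⟨r, hbr, -⟩ := EReal.exists_between_coe_real hb
  obtain ⟨s, hs⟩ := (hray.eventually_gt_atTop r).exists
  exact ⟨s • q, hbr.trans (EReal.coe_lt_coe_iff.2 hs)⟩

theorem fenchelConj_ne_top_of_hopfPhi_eq_coe {t : ℝ} {x q : EuclideanSpace ℝ (Fin n)} {v : ℝ}
    (hv : hopfPhi σ H t x q = v) : fenchelConj σ q ≠ ⊤ := by
  intro htop
  rw [hopfPhi, htop, EReal.sub_top] at hv
  exact EReal.bot_ne_coe v hv

theorem hopfPhi_eq_iInf (σ : EuclideanSpace ℝ (Fin n) → ℝ) (H : ℝ → EuclideanSpace ℝ (Fin n) → ℝ)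
    (t : ℝ) (x : EuclideanSpace ℝ (Fin n)) :
    hopfPhi σ H t x = fun q => ⨅ y : EuclideanSpace ℝ (Fin n),
      (((⟪x, q⟫ - ∫ τ in (0:ℝ)..t, H τ q) - (⟪y, q⟫ - σ y) : ℝ) : EReal) := by
  ext q
  rw [hopfPhi, fenchelConj, EReal.coe_sub_iSup]
  simp only [EReal.coe_sub]

theorem upperSemicontinuous_hopfPhi
    (hH : Continuous fun w : ℝ × EuclideanSpace ℝ (Fin n) => H w.1 w.2)
    (t : ℝ) (x : EuclideanSpace ℝ (Fin n)) : UpperSemicontinuous (hopfPhi σ H t x) := by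
  have hint : Continuous fun q : EuclideanSpace ℝ (Fin n) => ∫ τ in (0:ℝ)..t, H τ q :=
    intervalIntegral.continuous_parametric_intervalIntegral_of_continuous'
      (f := fun q τ => H τ q) (hH.comp continuous_swap) 0 t
  rw [hopfPhi_eq_iInf]
  exact upperSemicontinuous_iInf fun y => Continuous.upperSemicontinuous <|
    continuous_coe_real_ereal.comp <|
      ((continuous_const.inner continuous_id).sub hint).sub
        ((continuous_const.inner continuous_id).sub continuous_const)

theorem hopfPhi_eq_coe_add_hopfIncrement
    (hH : Continuous fun w : ℝ × EuclideanSpace ℝ (Fin n) => H w.1 w.2)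
    {z₀ : ℝ × EuclideanSpace ℝ (Fin n)} {q : EuclideanSpace ℝ (Fin n)} {v : ℝ}
    (hv : hopfPhi σ H z₀.1 z₀.2 q = v) (z : ℝ × EuclideanSpace ℝ (Fin n)) :
    hopfPhi σ H z.1 z.2 q = ((v + hopfIncrement H z₀ z q : ℝ) : EReal) := by
  obtain ⟨s, hs⟩ : ∃ s : ℝ, fenchelConj σ q = s :=
    ⟨_, (EReal.coe_toReal (fenchelConj_ne_top_of_hopfPhi_eq_coe hv) (fenchelConj_ne_bot σ q)).symm⟩
  have hint : ∀ t, IntervalIntegrable (fun τ => H τ q) MeasureTheory.volume 0 t :=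
    fun t => (hH.comp (continuous_id.prodMk continuous_const)).intervalIntegrable _ _
  rw [hopfPhi, hs, ← EReal.coe_sub, EReal.coe_eq_coe_iff] at hv ⊢
  rw [← hv, hopfIncrement, ← intervalIntegral.integral_interval_sub_left (hint z.1) (hint z₀.1),
    inner_sub_left]
  ring

/-- Applied to maximizers `Q z` of `φ(z, ·)` and the maximum `u z`: they converge to the unique
maximizer `p` of `φ(z₀, ·)`. -/
theorem tendsto_of_hopfPhi_eq_sub
    (hH : Continuous fun w : ℝ × EuclideanSpace ℝ (Fin n) => H w.1 w.2)
    {z₀ : ℝ × EuclideanSpace ℝ (Fin n)} {p : EuclideanSpace ℝ (Fin n)} {v₀ : ℝ}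
    (hmax : ∀ q, (v₀ : EReal) ≤ hopfPhi σ H z₀.1 z₀.2 q → q = p)
    {K : Set (EuclideanSpace ℝ (Fin n))} (hK : IsCompact K)
    {u : ℝ × EuclideanSpace ℝ (Fin n) → ℝ}
    {Q : ℝ × EuclideanSpace ℝ (Fin n) → EuclideanSpace ℝ (Fin n)}
    (hQK : ∀ᶠ z in 𝓝 z₀, Q z ∈ K) (hlow : ∀ᶠ z in 𝓝 z₀, hopfIncrement H z₀ z p ≤ u z - v₀)
    (hQ : ∀ᶠ z in 𝓝 z₀,
      hopfPhi σ H z₀.1 z₀.2 (Q z) = ((u z - hopfIncrement H z₀ z (Q z) : ℝ) : EReal)) :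
    Tendsto Q (𝓝 z₀) (𝓝 p) := by
  have hincr : Tendsto (fun z => v₀ + hopfIncrement H z₀ z p - hopfIncrement H z₀ z (Q z))
      (𝓝 z₀) (𝓝 v₀) := by
    simpa using (tendsto_const_nhds.add (tendsto_hopfIncrement hH (isCompact_singleton (x := p))
      (Q := fun _ => p) (by simp))).sub (tendsto_hopfIncrement hH hK hQK)
  refine (upperSemicontinuous_hopfPhi hH z₀.1 z₀.2).tendsto_nhds_of_unique_max hK hmax hQK
    (continuous_coe_real_ereal.tendsto _ |>.comp hincr) ?_
  filter_upwards [hlow, hQ] with z h₁ h₂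
  rw [Function.comp_apply, h₂, EReal.coe_le_coe_iff]
  linarith

end Hopf

theorem stmt6_general {n : ℕ} (T : ℝ) (L : NNReal)
    (σ : EuclideanSpace ℝ (Fin n) → ℝ)
    (hlip : LipschitzWith L σ)
    (H : ℝ → EuclideanSpace ℝ (Fin n) → ℝ)
    (hH : Continuous (fun p : ℝ × EuclideanSpace ℝ (Fin n) => H p.1 p.2))
    (u : ℝ × EuclideanSpace ℝ (Fin n) → ℝ)
    (hu : ∀ t ∈ Set.Icc (0:ℝ) T, ∀ x,
      IsGreatest (Set.range (hopfPhi σ H t x)) ((u (t, x) : ℝ) : EReal))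
    (t₀ : ℝ) (x₀ p : EuclideanSpace ℝ (Fin n)) (ht₀ : t₀ ∈ Set.Ioo 0 T)
    (hsingle : hopfArgmax σ H t₀ x₀ = {p}) :
    HasFDerivAt u
      ((-(H t₀ p)) • (ContinuousLinearMap.fst ℝ ℝ (EuclideanSpace ℝ (Fin n))) +
        (innerSL ℝ p).comp (ContinuousLinearMap.snd ℝ ℝ (EuclideanSpace ℝ (Fin n))))
      (t₀, x₀) := by
  have hu₀ := hu t₀ (Ioo_subset_Icc_self ht₀) x₀
  have hmax : ∀ q, (u (t₀, x₀) : EReal) ≤ hopfPhi σ H t₀ x₀ q → q = p := fun q hq => by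
    have : q ∈ hopfArgmax σ H t₀ x₀ := fun q' => (hu₀.2 ⟨q', rfl⟩).trans hq
    rwa [hsingle] at this
  have hp : hopfPhi σ H t₀ x₀ p = u (t₀, x₀) := by
    obtain ⟨q, hq⟩ := hu₀.1
    rwa [← hmax q hq.ge]
  have hnear : ∀ᶠ z in 𝓝 (t₀, x₀), z.1 ∈ Icc 0 T :=
    continuousAt_fst.preimage_mem_nhds (Icc_mem_nhds ht₀.1 ht₀.2)
  obtain ⟨Q, hQ⟩ := (hnear.mono fun z hz => (hu z.1 hz z.2).1).choice
  have hlow : ∀ᶠ z in 𝓝 (t₀, x₀), hopfIncrement H (t₀, x₀) z p ≤ u z - u (t₀, x₀) := by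
    filter_upwards [hnear] with z hz
    have := (hu z.1 hz z.2).2 ⟨p, rfl⟩
    rw [hopfPhi_eq_coe_add_hopfIncrement (z₀ := (t₀, x₀)) hH hp z, EReal.coe_le_coe_iff] at this
    linarith
  have hQ₀ : ∀ᶠ z in 𝓝 (t₀, x₀), hopfPhi σ H t₀ x₀ (Q z) =
      ((u z - hopfIncrement H (t₀, x₀) z (Q z) : ℝ) : EReal) := by
    filter_upwards [hQ] with z hz
    rw [hopfPhi_eq_coe_add_hopfIncrement hH hz (t₀, x₀), hopfIncrement_swap, sub_eq_add_neg]
  have hup : ∀ᶠ z in 𝓝 (t₀, x₀), u z - u (t₀, x₀) ≤ hopfIncrement H (t₀, x₀) z (Q z) := by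
    filter_upwards [hQ₀] with z hz
    have := hu₀.2 ⟨Q z, rfl⟩
    rw [hz, EReal.coe_le_coe_iff] at this
    linarith
  have hQL : ∀ᶠ z in 𝓝 (t₀, x₀), Q z ∈ Metric.closedBall 0 L := hQ.mono fun z hz =>
    mem_closedBall_zero_iff.2 (norm_le_of_fenchelConj_ne_top hlip
      (fenchelConj_ne_top_of_hopfPhi_eq_coe hz))
  have hQp : Tendsto Q (𝓝 (t₀, x₀)) (𝓝 p) :=
    tendsto_of_hopfPhi_eq_sub (z₀ := (t₀, x₀)) hH hmax (isCompact_closedBall 0 L) hQL hlow hQ₀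
  exact hasFDerivAt_of_hopfIncrement_le hH hQp hlow hup

theorem stmt6 {n : ℕ} (T : ℝ) (hT : 0 < T) (L : NNReal)
    (σ : EuclideanSpace ℝ (Fin n) → ℝ)
    (hconv : ConvexOn ℝ Set.univ σ) (hlip : LipschitzWith L σ)
    (H : ℝ → EuclideanSpace ℝ (Fin n) → ℝ)
    (hH : Continuous (fun p : ℝ × EuclideanSpace ℝ (Fin n) => H p.1 p.2))
    (u : ℝ × EuclideanSpace ℝ (Fin n) → ℝ)
    (hu : ∀ t ∈ Set.Icc (0:ℝ) T, ∀ x,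
      IsGreatest (Set.range (hopfPhi σ H t x)) ((u (t, x) : ℝ) : EReal))
    (t₀ : ℝ) (x₀ p : EuclideanSpace ℝ (Fin n)) (ht₀ : t₀ ∈ Set.Ioo 0 T)
    (hsingle : hopfArgmax σ H t₀ x₀ = {p}) :
    HasFDerivAt u
      ((-(H t₀ p)) • (ContinuousLinearMap.fst ℝ ℝ (EuclideanSpace ℝ (Fin n))) +
        (innerSL ℝ p).comp (ContinuousLinearMap.snd ℝ ℝ (EuclideanSpace ℝ (Fin n))))
      (t₀, x₀) :=
  stmt6_general T L σ hlip H hH u hu t₀ x₀ p ht₀ hsingle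
end
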